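/- Let (A,b,c) be a matrix-centre realization at Y ∈ (ℂ^{n×n})^d such that every operator A_j(G) (G ∈ ℂ^{n×n}) is compact. Let M := C_{A,c} ⊖ (C_{A,c} ∩ O_{A†,b}^⊥), Q₀ the orthogonal projection onto M, and (A⁰,b₀,c₀) the compression A⁰_j(G) := Q₀A_j(G)|_M, b₀ := Q₀b, c₀ := Q₀c. Then for every m ≥ 1 and every X ∈ (ℂ^{mn×mn})^d: if L_A(X − I_m⊗Y) is invertible, then L_{A⁰}(X − I_m⊗Y) is invertible; i.e. D^Y_m(A) ⊆ D^Y_m(A⁰). -/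

import Mathlib

set_option synthInstance.maxHeartbeats 1000000
set_option maxHeartbeats 1000000

noncomputable section
namespace MC

/-- Projection onto the `p`-th summand of the Hilbert direct sum of copies of `E`. -/
def projL (ι : Type*) [Fintype ι] (E : Type*) [NormedAddCommGroup E] [InnerProductSpace ℂ E]
    (p : ι) : PiLp 2 (fun _ : ι => E) →L[ℂ] E :=
  PiLp.proj 2 (fun _ : ι => E) p

/-- Inclusion of the `p`-th summand into the Hilbert direct sum of copies of `E`. -/
def inclL (ι : Type*) [Fintype ι] [DecidableEq ι] (E : Type*) [NormedAddCommGroup E]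
    [InnerProductSpace ℂ E] (p : ι) : E →L[ℂ] PiLp 2 (fun _ : ι => E) :=
  (PiLp.continuousLinearEquiv 2 ℂ (fun _ : ι => E)).symm.toContinuousLinearMap.comp
    (ContinuousLinearMap.pi (fun q => if q = p then ContinuousLinearMap.id ℂ E else 0))

variable {E : Type*} [NormedAddCommGroup E] [InnerProductSpace ℂ E]

instance piLpCompleteSpace {ι : Type*} [Fintype ι] [CompleteSpace E] :
    CompleteSpace (PiLp 2 (fun _ : ι => E)) :=
  inferInstance

/-- The `(p,q)` block (an `ν × ν` matrix) of a block matrix indexed by `μ × ν`. -/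
def blk {μ ν : Type*} (Z : Matrix (μ × ν) (μ × ν) ℂ) (p q : μ) : Matrix ν ν ℂ :=
  Matrix.of fun i j => Z (p, i) (q, j)

/-- The ampliation `(id_μ ⊗ A)(Z)` of a map `A : ℂ^{ν×ν} → B(E)` applied to a block
matrix `Z`, acting on the Hilbert direct sum `ℂ^μ ⊗ E`. -/
def amp {μ ν : Type*} [Fintype μ] [DecidableEq μ]
    (A : Matrix ν ν ℂ → (E →L[ℂ] E)) (Z : Matrix (μ × ν) (μ × ν) ℂ) :
    PiLp 2 (fun _ : μ => E) →L[ℂ] PiLp 2 (fun _ : μ => E) :=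
  ∑ p, ∑ q, (inclL μ E p).comp ((A (blk Z p q)).comp (projL μ E q))

/-- The linear pencil `L_A(X) = I - Σ_j (id_μ ⊗ A_j)(X_j)`. -/
def pencil {d : ℕ} {μ ν : Type*} [Fintype μ] [DecidableEq μ]
    (A : Fin d → Matrix ν ν ℂ → (E →L[ℂ] E)) (X : Fin d → Matrix (μ × ν) (μ × ν) ℂ) :
    PiLp 2 (fun _ : μ => E) →L[ℂ] PiLp 2 (fun _ : μ => E) :=
  1 - ∑ j, amp (A j) (X j)

/-- `I_μ ⊗ Y` as a block matrix. -/
def oneKron (μ : Type*) [DecidableEq μ] {ν : Type*} (Y : Matrix ν ν ℂ) :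
    Matrix (μ × ν) (μ × ν) ℂ :=
  Matrix.of fun p q => if p.1 = q.1 then Y p.2 q.2 else 0

/-- Restriction `ℂ^{μ×ν} → ℂ^ν` onto the `p`-th slot. -/
def restrL (μ ν : Type*) [Fintype μ] [Fintype ν] [DecidableEq ν] (p : μ) :
    EuclideanSpace ℂ (μ × ν) →L[ℂ] EuclideanSpace ℂ ν :=
  ∑ i : ν, (EuclideanSpace.proj ((p, i) : μ × ν)).smulRight (EuclideanSpace.single i (1 : ℂ))

/-- The ampliation `I_μ ⊗ b : ℂ^{μ×ν} → ℂ^μ ⊗ E` of `b : ℂ^ν → E`. -/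
def ampVec {μ ν : Type*} [Fintype μ] [DecidableEq μ] [Fintype ν] [DecidableEq ν]
    (b : EuclideanSpace ℂ ν →L[ℂ] E) :
    EuclideanSpace ℂ (μ × ν) →L[ℂ] PiLp 2 (fun _ : μ => E) :=
  ∑ p : μ, (inclL μ E p).comp (b.comp (restrL μ ν p))

/-- The quantized transfer function
`f(X) = (I_μ⊗b)^* L_A(X - I_μ⊗Y)^{-1} (I_μ⊗c)` of a matrix-centre realization,
as an operator on `ℂ^{μ×ν}`. -/
def transfer {d : ℕ} {μ ν : Type*} [Fintype μ] [DecidableEq μ] [Fintype ν] [DecidableEq ν]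
    [CompleteSpace E]
    (A : Fin d → Matrix ν ν ℂ → (E →L[ℂ] E))
    (b c : EuclideanSpace ℂ ν →L[ℂ] E) (Y : Fin d → Matrix ν ν ℂ)
    (X : Fin d → Matrix (μ × ν) (μ × ν) ℂ) :
    EuclideanSpace ℂ (μ × ν) →L[ℂ] EuclideanSpace ℂ (μ × ν) :=
  (ContinuousLinearMap.adjoint (ampVec (μ := μ) b)).comp
    ((Ring.inverse (pencil A (fun j => X j - oneKron μ (Y j)))).comp (ampVec c))

/-- The column norm of a `d`-tuple of matrices: the operator norm of the column
`(X_1; …; X_d)`. -/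
def colNorm {d : ℕ} {ι : Type*} [Fintype ι] [DecidableEq ι] (X : Fin d → Matrix ι ι ℂ) : ℝ :=
  ‖LinearMap.toContinuousLinearMap
      (Matrix.toEuclideanLin
        (Matrix.of fun (pq : Fin d × ι) (r : ι) => X pq.1 pq.2 r))‖

/-- The word operator `A^ω(G_1,…,G_ℓ) = A_{i_1}(G_1) ⋯ A_{i_ℓ}(G_ℓ)`, encoded by the
list `[(i_1,G_1),…,(i_ℓ,G_ℓ)]`; the empty word gives the identity. -/
def wordOp {d : ℕ} {ν : Type*}
    (A : Fin d → Matrix ν ν ℂ → (E →L[ℂ] E)) :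
    List (Fin d × Matrix ν ν ℂ) → (E →L[ℂ] E)
  | [] => 1
  | g :: t => (A g.1 g.2) * wordOp A t

/-- The adjoint word operator `A^{ω;†}(G_1,…,G_ℓ) = A_{i_ℓ}(G_ℓ^*)^* ⋯ A_{i_1}(G_1^*)^*`. -/
def wordOpDag {d : ℕ} {ν : Type*} [CompleteSpace E]
    (A : Fin d → Matrix ν ν ℂ → (E →L[ℂ] E))
    (l : List (Fin d × Matrix ν ν ℂ)) : E →L[ℂ] E :=
  ContinuousLinearMap.adjoint (wordOp A (l.map fun g => (g.1, g.2.conjTranspose)))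

/-- The controllable subspace `C_{A,c}`. -/
def ctrlSpace {d : ℕ} {ν : Type*} [Fintype ν]
    (A : Fin d → Matrix ν ν ℂ → (E →L[ℂ] E))
    (c : EuclideanSpace ℂ ν →L[ℂ] E) : Submodule ℂ E :=
  (Submodule.span ℂ {x : E | ∃ l v, x = wordOp A l (c v)}).topologicalClosure

/-- The observable subspace `O_{A†,b}`. -/
def obsSpace {d : ℕ} {ν : Type*} [Fintype ν] [CompleteSpace E]
    (A : Fin d → Matrix ν ν ℂ → (E →L[ℂ] E))
    (b : EuclideanSpace ℂ ν →L[ℂ] E) : Submodule ℂ E :=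
  (Submodule.span ℂ {x : E | ∃ l u, x = wordOpDag A l (b u)}).topologicalClosure

/-- Minimality: controllable and observable. -/
def Minimal {d : ℕ} {ν : Type*} [Fintype ν] [CompleteSpace E]
    (A : Fin d → Matrix ν ν ℂ → (E →L[ℂ] E))
    (b c : EuclideanSpace ℂ ν →L[ℂ] E) : Prop :=
  ctrlSpace A c = ⊤ ∧ obsSpace A b = ⊤

/-- Two matrix-centre realizations at the same centre `Y` are analytically equivalent at `Y`
if on some uniform column-ball about `Y` both pencils are invertible and the quantized
transfer functions agree. -/
def AnalyticEquiv {d n : ℕ} {E F : Type*}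
    [NormedAddCommGroup E] [InnerProductSpace ℂ E] [CompleteSpace E]
    [NormedAddCommGroup F] [InnerProductSpace ℂ F] [CompleteSpace F]
    (A : Fin d → Matrix (Fin n) (Fin n) ℂ → (E →L[ℂ] E))
    (b c : EuclideanSpace ℂ (Fin n) →L[ℂ] E)
    (A' : Fin d → Matrix (Fin n) (Fin n) ℂ → (F →L[ℂ] F))
    (b' c' : EuclideanSpace ℂ (Fin n) →L[ℂ] F)
    (Y : Fin d → Matrix (Fin n) (Fin n) ℂ) : Prop :=
  ∃ r > 0, ∀ m : ℕ, 0 < m → ∀ X : Fin d → Matrix (Fin m × Fin n) (Fin m × Fin n) ℂ,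
    colNorm (fun j => X j - oneKron (Fin m) (Y j)) < r →
      IsUnit (pencil A fun j => X j - oneKron (Fin m) (Y j)) ∧
      IsUnit (pencil A' fun j => X j - oneKron (Fin m) (Y j)) ∧
      transfer A b c Y X = transfer A' b' c' Y X

variable {H : Type*} [NormedAddCommGroup H] [InnerProductSpace ℂ H] [CompleteSpace H]

set_option linter.unusedSectionVars false
-- ===== auxiliary lemmas =====
section Helpers

open ContinuousLinearMap

variable {ι : Type*} [Fintype ι] [DecidableEq ι]

lemma projL_apply (p : ι) (x : PiLp 2 (fun _ : ι => E)) : projL ι E p x = x p := rfl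

lemma inclL_apply (p q : ι) (v : E) :
    inclL ι E p v q = if q = p then v else 0 := by
  simp [inclL]
  by_cases h : q = p <;> simp [h]

lemma projL_inclL (p q : ι) (v : E) :
    projL ι E q (inclL ι E p v) = if q = p then v else 0 := inclL_apply p q v

/-- componentwise operator -/
def ampQ (ι : Type*) [Fintype ι] (Q : E →L[ℂ] E) :
    PiLp 2 (fun _ : ι => E) →L[ℂ] PiLp 2 (fun _ : ι => E) :=
  (PiLp.continuousLinearEquiv 2 ℂ (fun _ : ι => E)).symm.toContinuousLinearMap.comp
    (ContinuousLinearMap.pi (fun p => Q.comp (projL ι E p)))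

lemma ampQ_apply (Q : E →L[ℂ] E) (x : PiLp 2 (fun _ : ι => E)) (p : ι) :
    ampQ ι Q x p = Q (x p) := rfl

lemma amp_apply_comp {μ ν : Type*} [Fintype μ] [DecidableEq μ]
    (A : Matrix ν ν ℂ → (E →L[ℂ] E)) (Z : Matrix (μ × ν) (μ × ν) ℂ)
    (x : PiLp 2 (fun _ : μ => E)) (r : μ) :
    amp A Z x r = ∑ q, A (blk Z r q) (x q) := by
  have : amp A Z x r = projL μ E r (amp A Z x) := rfl
  rw [this, amp]
  rw [ContinuousLinearMap.sum_apply, map_sum]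
  have h1 : ∀ p, projL μ E r ((∑ q, (inclL μ E p).comp ((A (blk Z p q)).comp (projL μ E q))) x)
      = ∑ q, projL μ E r (inclL μ E p (A (blk Z p q) (x q))) := by
    intro p
    rw [ContinuousLinearMap.sum_apply, map_sum]
    exact Finset.sum_congr rfl fun q _ => rfl
  simp_rw [h1, projL_inclL]
  rw [Finset.sum_comm]
  simp [Finset.sum_ite_eq, projL_apply]

end Helpers

section Helpers2
open ContinuousLinearMap

variable {ι : Type*} [Fintype ι] [DecidableEq ι]

lemma isCompactOperator_finsum {κ : Type*} (s : Finset κ)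
    {F G : Type*} [NormedAddCommGroup F] [NormedSpace ℂ F]
    [NormedAddCommGroup G] [NormedSpace ℂ G]
    (f : κ → (F →L[ℂ] G)) (h : ∀ i ∈ s, IsCompactOperator ⇑(f i)) :
    IsCompactOperator ⇑(∑ i ∈ s, f i) := by
  classical
  induction s using Finset.induction_on with
  | empty => simpa using isCompactOperator_zero
  | insert _ _ hnotmem ih =>
    rename_i a t
    rw [Finset.sum_insert hnotmem]
    have h1 : IsCompactOperator (⇑(f a) + ⇑(∑ i ∈ t, f i)) :=
      (h a (Finset.mem_insert_self a t)).add
        (ih fun i hi => h i (Finset.mem_insert_of_mem hi))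
    simpa [ContinuousLinearMap.coe_add'] using h1

lemma isCompactOperator_amp {μ ν : Type*} [Fintype μ] [DecidableEq μ]
    (A : Matrix ν ν ℂ → (E →L[ℂ] E)) (hA : ∀ G, IsCompactOperator ⇑(A G))
    (Z : Matrix (μ × ν) (μ × ν) ℂ) : IsCompactOperator ⇑(amp A Z) := by
  apply isCompactOperator_finsum
  intro p _
  apply isCompactOperator_finsum
  intro q _
  have h1 : IsCompactOperator (⇑(A (blk Z p q)) ∘ ⇑(projL μ E q)) :=
    (hA _).comp_clm (projL μ E q)
  have h2 : IsCompactOperator (⇑(inclL μ E p) ∘ (⇑(A (blk Z p q)) ∘ ⇑(projL μ E q))) :=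
    h1.continuous_comp (inclL μ E p).continuous
  simpa [ContinuousLinearMap.coe_comp, Function.comp_assoc] using h2

/-- the ampliated submodule -/
def piSub (ι : Type*) [Fintype ι] (N : Submodule ℂ E) :
    Submodule ℂ (PiLp 2 (fun _ : ι => E)) where
  carrier := {x | ∀ p, x p ∈ N}
  add_mem' := fun ha hb p => N.add_mem (ha p) (hb p)
  zero_mem' := fun p => N.zero_mem
  smul_mem' := fun r x hx p => N.smul_mem r (hx p)

lemma piSub_mem {N : Submodule ℂ E} {x : PiLp 2 (fun _ : ι => E)} :
    x ∈ piSub ι N ↔ ∀ p, x p ∈ N := Iff.rfl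

lemma piSub_isClosed (N : Submodule ℂ E) (hN : IsClosed (N : Set E)) :
    IsClosed ((piSub ι N : Submodule ℂ (PiLp 2 (fun _ : ι => E))) : Set (PiLp 2 (fun _ : ι => E))) := by
  have : ((piSub ι N : Submodule ℂ (PiLp 2 (fun _ : ι => E))) : Set (PiLp 2 (fun _ : ι => E)))
      = ⋂ p, (projL ι E p) ⁻¹' (N : Set E) := by
    ext x
    simp [piSub_mem, projL_apply]
  rw [this]
  exact isClosed_iInter fun p => hN.preimage (projL ι E p).continuous

end Helpers2

section Helpers3
open ContinuousLinearMap

lemma wordOp_append {d : ℕ} {ν : Type*} (A : Fin d → Matrix ν ν ℂ → (E →L[ℂ] E))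
    (l1 l2 : List (Fin d × Matrix ν ν ℂ)) :
    wordOp A (l1 ++ l2) = (wordOp A l1) * (wordOp A l2) := by
  induction l1 with
  | nil => simp [wordOp]
  | cons g t ih => simp [wordOp, ih, mul_assoc]

lemma mem_topologicalClosure_span_of_maps {f : E →L[ℂ] E} {s : Set E}
    (h : ∀ x ∈ s, f x ∈ Submodule.span ℂ s) :
    ∀ x ∈ (Submodule.span ℂ s).topologicalClosure, f x ∈ (Submodule.span ℂ s).topologicalClosure := by
  intro x hx
  set p := Submodule.span ℂ s with hp
  have hmap : Submodule.map (f : E →ₗ[ℂ] E) p ≤ p := by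
    rw [hp, Submodule.map_span]
    exact Submodule.span_le.mpr (fun y hy => by
      obtain ⟨z, hz, rfl⟩ := hy
      exact h z hz)
  have hx' : x ∈ closure (p : Set E) := hx
  have h1 : f x ∈ f '' closure (p : Set E) := ⟨x, hx', rfl⟩
  have h2 : f '' closure (p : Set E) ⊆ closure (f '' (p : Set E)) :=
    image_closure_subset_closure_image f.continuous
  have h3 : f '' (p : Set E) ⊆ (p : Set E) := by
    intro y hy
    obtain ⟨z, hz, rfl⟩ := hy
    exact hmap ⟨z, hz, rfl⟩
  have : f x ∈ closure (p : Set E) := closure_mono h3 (h2 h1)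
  exact this

lemma ctrlSpace_invariant {d : ℕ} {ν : Type*} [Fintype ν]
    (A : Fin d → Matrix ν ν ℂ → (E →L[ℂ] E)) (c : EuclideanSpace ℂ ν →L[ℂ] E)
    (j : Fin d) (G : Matrix ν ν ℂ) {x : E} (hx : x ∈ ctrlSpace A c) :
    A j G x ∈ ctrlSpace A c := by
  apply mem_topologicalClosure_span_of_maps (f := A j G) (s := {x : E | ∃ l v, x = wordOp A l (c v)})
    _ x hx
  rintro y ⟨l, v, rfl⟩
  exact Submodule.subset_span ⟨(j, G) :: l, v, rfl⟩

variable [CompleteSpace E]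

lemma wordOpDag_snoc {d : ℕ} {ν : Type*}
    (A : Fin d → Matrix ν ν ℂ → (E →L[ℂ] E))
    (l : List (Fin d × Matrix ν ν ℂ)) (j : Fin d) (G : Matrix ν ν ℂ) :
    wordOpDag A (l ++ [(j, G.conjTranspose)]) =
      (ContinuousLinearMap.adjoint (A j G)).comp (wordOpDag A l) := by
  unfold wordOpDag
  rw [List.map_append]
  rw [wordOp_append]
  simp only [List.map_cons, List.map_nil, Matrix.conjTranspose_conjTranspose]
  have h1 : wordOp A [(j, G)] = A j G := by simp [wordOp]
  rw [h1]
  have h2 : wordOp A (l.map fun g => (g.1, g.2.conjTranspose)) * A j G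
      = (wordOp A (l.map fun g => (g.1, g.2.conjTranspose))).comp (A j G) := rfl
  rw [h2, ContinuousLinearMap.adjoint_comp]

lemma obsSpace_adj_invariant {d : ℕ} {ν : Type*} [Fintype ν]
    (A : Fin d → Matrix ν ν ℂ → (E →L[ℂ] E)) (b : EuclideanSpace ℂ ν →L[ℂ] E)
    (j : Fin d) (G : Matrix ν ν ℂ) {x : E} (hx : x ∈ obsSpace A b) :
    ContinuousLinearMap.adjoint (A j G) x ∈ obsSpace A b := by
  apply mem_topologicalClosure_span_of_maps (f := ContinuousLinearMap.adjoint (A j G))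
    (s := {x : E | ∃ l u, x = wordOpDag A l (b u)}) _ x hx
  rintro y ⟨l, u, rfl⟩
  refine Submodule.subset_span ⟨l ++ [(j, G.conjTranspose)], u, ?_⟩
  rw [wordOpDag_snoc]
  rfl

lemma obsPerp_invariant {d : ℕ} {ν : Type*} [Fintype ν]
    (A : Fin d → Matrix ν ν ℂ → (E →L[ℂ] E)) (b : EuclideanSpace ℂ ν →L[ℂ] E)
    (j : Fin d) (G : Matrix ν ν ℂ) {x : E} (hx : x ∈ (obsSpace A b)ᗮ) :
    A j G x ∈ (obsSpace A b)ᗮ := by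
  rw [Submodule.mem_orthogonal] at hx ⊢
  intro u hu
  rw [← ContinuousLinearMap.adjoint_inner_left]
  exact hx _ (obsSpace_adj_invariant A b j G hu)

lemma mem_N_of_mem_C_sub_proj
    (C N : Submodule ℂ E) (hNc : IsClosed (N : Set E)) (hNC : N ≤ C)
    (Q : E →L[ℂ] E) (hQi : ∀ x, Q (Q x) = Q x)
    (hQa : ∀ x y : E, (inner ℂ (Q x) y : ℂ) = inner ℂ x (Q y))
    (hQr : LinearMap.range (Q : E →ₗ[ℂ] E) = C ⊓ Nᗮ) :
    ∀ y ∈ C, y - Q y ∈ N := by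
  intro y hy
  set z := y - Q y with hz
  have hQyM : Q y ∈ C ⊓ Nᗮ := hQr ▸ ⟨y, rfl⟩
  have hzC : z ∈ C := C.sub_mem hy hQyM.1
  have hQz : Q z = 0 := by
    rw [hz, map_sub, hQi, sub_self]
  have hzMperp : ∀ u ∈ C ⊓ Nᗮ, (inner ℂ u z : ℂ) = 0 := by
    intro u hu
    have huQ : ∃ w, Q w = u := by
      have h : u ∈ LinearMap.range (Q : E →ₗ[ℂ] E) := hQr ▸ hu
      obtain ⟨w, hw⟩ := h; exact ⟨w, hw⟩
    obtain ⟨w, rfl⟩ := huQ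
    rw [hQa, hQz, inner_zero_right]
  haveI : CompleteSpace N := hNc.completeSpace_coe
  set pz := ((N.orthogonalProjectionOnto z : N) : E) with hpz
  have hpzN : pz ∈ N := SetLike.coe_mem _
  have hw : z - pz ∈ Nᗮ := Submodule.sub_starProjection_mem_orthogonal (K := N) z
  have hwC : z - pz ∈ C := C.sub_mem hzC (hNC hpzN)
  have hwM : z - pz ∈ C ⊓ Nᗮ := ⟨hwC, hw⟩
  have h0 : (inner ℂ (z - pz) (z - pz) : ℂ) = 0 := by
    rw [inner_sub_right]
    have h1 : (inner ℂ (z - pz) z : ℂ) = 0 := hzMperp _ hwM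
    have h2 : (inner ℂ (z - pz) pz : ℂ) = 0 := by
      rw [← inner_conj_symm]
      rw [(Submodule.mem_orthogonal _ _).mp hw pz hpzN]
      simp
    rw [h1, h2, sub_zero]
  have : z - pz = 0 := inner_self_eq_zero.mp h0
  have : z = pz := by rwa [sub_eq_zero] at this
  rw [this]
  exact hpzN

end Helpers3

section Helpers4
variable {ι : Type*} [Fintype ι]

lemma piLp_ext {x y : PiLp 2 (fun _ : ι => E)} (h : ∀ p, x p = y p) : x = y := PiLp.ext h

lemma sum_component {κ : Type*} (s : Finset κ) (v : κ → PiLp 2 (fun _ : ι => E)) (r : ι) :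
    (∑ i ∈ s, v i) r = ∑ i ∈ s, v i r := by
  have h : (∑ i ∈ s, v i) r = projL ι E r (∑ i ∈ s, v i) := rfl
  rw [h, map_sum]
  rfl

end Helpers4

section Fred

open ContinuousLinearMap Filter Topology

variable [CompleteSpace E]


lemma bounded_below_of_compact (S : E →L[ℂ] E) (hS : IsCompactOperator ⇑S)
    (hinj : Function.Injective ⇑(1 - S)) :
    ∃ c : ℝ, 0 < c ∧ ∀ x, c * ‖x‖ ≤ ‖(1 - S) x‖ := by
  set T := 1 - S with hT
  by_contra h
  push_neg at h
  have hex : ∀ n : ℕ, ∃ v : E, ‖v‖ = 1 ∧ ‖T v‖ < 1 / (n + 1) := by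
    intro n
    obtain ⟨x, hx⟩ := h (1 / (n + 1)) (by positivity)
    have hx0 : x ≠ 0 := by
      rintro rfl
      simp at hx
    have hxpos : (0:ℝ) < ‖x‖ := norm_pos_iff.mpr hx0
    refine ⟨((‖x‖ : ℂ))⁻¹ • x, ?_, ?_⟩
    · rw [norm_smul]
      simp [inv_mul_cancel₀ (norm_ne_zero_iff.mpr hx0)]
    · rw [map_smul, norm_smul]
      simp only [norm_inv, Complex.norm_real, norm_norm]
      rw [inv_mul_lt_iff₀ hxpos]
      calc ‖T x‖ < 1 / (n + 1) * ‖x‖ := hx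
        _ = ‖x‖ * (1 / (n+1)) := by ring
  choose v hv1 hv2 using hex
  have hTv : Tendsto (fun n => T (v n)) atTop (𝓝 0) := by
    have h0 : Tendsto (fun n : ℕ => 1 / ((n : ℝ) + 1)) atTop (𝓝 0) :=
      tendsto_one_div_add_atTop_nhds_zero_nat
    exact squeeze_zero_norm (fun n => (hv2 n).le) h0
  have hball : ∀ n, v n ∈ Metric.closedBall (0 : E) 1 := by
    intro n; simp [Metric.mem_closedBall, (hv1 n).le, dist_zero_right, hv1 n]
  have hKc : IsCompact (closure (⇑S '' Metric.closedBall 0 1)) :=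
    hS.isCompact_closure_image_of_bounded (f := (S : E →ₗ[ℂ] E))
      Metric.isBounded_closedBall
  have hmem : ∀ n, S (v n) ∈ closure (⇑S '' Metric.closedBall 0 1) := fun n =>
    subset_closure ⟨v n, hball n, rfl⟩
  obtain ⟨y, -, φ, hφ, hy⟩ := hKc.tendsto_subseq hmem
  have hvy : Tendsto (fun k => v (φ k)) atTop (𝓝 y) := by
    have heq : (fun k => v (φ k)) = fun k => T (v (φ k)) + S (v (φ k)) := by
      funext k; simp [hT]
    rw [heq]
    simpa using (hTv.comp hφ.tendsto_atTop).add hy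
  have hyn : ‖y‖ = 1 := by
    have h1 : Tendsto (fun k => ‖v (φ k)‖) atTop (𝓝 ‖y‖) :=
      (continuous_norm.tendsto y).comp hvy
    have heq : (fun k => ‖v (φ k)‖) = fun _ => (1:ℝ) := by funext k; exact hv1 (φ k)
    rw [heq] at h1
    exact (tendsto_nhds_unique h1 tendsto_const_nhds)
  have hTy : T y = 0 := by
    have h1 : Tendsto (fun k => T (v (φ k))) atTop (𝓝 (T y)) :=
      (T.continuous.tendsto y).comp hvy
    exact tendsto_nhds_unique h1 (hTv.comp hφ.tendsto_atTop)
  have hy0 : y = 0 := hinj (by simpa using hTy)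
  rw [hy0] at hyn; simp at hyn

lemma surjective_of_compact_of_injective (S : E →L[ℂ] E) (hS : IsCompactOperator ⇑S)
    (hinj : Function.Injective ⇑(1 - S)) : Function.Surjective ⇑(1 - S) := by
  set T := 1 - S with hT
  obtain ⟨c, hc, hcb⟩ := bounded_below_of_compact S hS hinj
  have hanti : ∀ k : ℕ, ∃ K : NNReal, AntilipschitzWith K ⇑(T ^ k) := by
    intro k
    induction k with
    | zero => exact ⟨1, by simpa [pow_zero, ContinuousLinearMap.one_def] using
        (AntilipschitzWith.id (α := E))⟩
    | succ k ih =>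
      obtain ⟨K, hK⟩ := ih
      have hT1 : AntilipschitzWith (c⁻¹).toNNReal ⇑T := by
        apply T.antilipschitz_of_bound
        intro x
        rw [Real.coe_toNNReal _ (by positivity)]
        calc ‖x‖ = c⁻¹ * (c * ‖x‖) := by field_simp
          _ ≤ c⁻¹ * ‖T x‖ := by
            have h' := hcb x
            have : (0:ℝ) ≤ c⁻¹ := by positivity
            nlinarith
      refine ⟨(c⁻¹).toNNReal * K, ?_⟩
      have heq : ⇑(T ^ (k+1)) = ⇑(T ^ k) ∘ ⇑T := by rw [pow_succ]; rfl
      rw [heq]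
      exact hK.comp hT1
  have hinjk : ∀ k : ℕ, Function.Injective ⇑(T ^ k) := by
    intro k
    induction k with
    | zero => intro a b h; simpa using h
    | succ k ih =>
      have heq : ⇑(T ^ (k+1)) = ⇑(T ^ k) ∘ ⇑T := by rw [pow_succ]; rfl
      rw [heq]
      exact ih.comp hinj
  set Hk : ℕ → Submodule ℂ E := fun k => LinearMap.range ((T ^ k : E →L[ℂ] E) : E →ₗ[ℂ] E) with hHk
  have hclosed : ∀ k, IsClosed ((Hk k : Set E)) := by
    intro k
    obtain ⟨K, hK⟩ := hanti k
    have := hK.isClosed_range (T ^ k).uniformContinuous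
    rw [hHk]; simp only [LinearMap.coe_range]; exact this
  have hmono : ∀ k, Hk (k+1) ≤ Hk k := by
    intro k x hx
    obtain ⟨z, rfl⟩ := hx
    rw [pow_succ]
    exact ⟨T z, rfl⟩
  have hmono' : ∀ {k l : ℕ}, k ≤ l → Hk l ≤ Hk k := fun hkl =>
    antitone_nat_of_succ_le hmono hkl
  by_contra hsurj
  have hne : ∃ y, ∀ x, T x ≠ y := by
    simp only [Function.Surjective, not_forall] at hsurj
    obtain ⟨y, hy⟩ := hsurj
    exact ⟨y, fun x h => hy ⟨x, h⟩⟩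
  obtain ⟨y, hy⟩ := hne
  have hstrict : ∀ k, (T ^ k) y ∈ Hk k ∧ (T ^ k) y ∉ Hk (k+1) := by
    intro k
    refine ⟨⟨y, rfl⟩, ?_⟩
    rintro ⟨z, hz⟩
    rw [pow_succ] at hz
    exact hy z (hinjk k hz)
  have hsep : ∀ k, ∃ x : E, ‖x‖ = 1 ∧ x ∈ Hk k ∧ x ∈ (Hk (k+1))ᗮ := by
    intro k
    haveI : CompleteSpace (Hk (k+1)) := (hclosed (k+1)).completeSpace_coe
    set w := (T ^ k) y with hw
    set p := (((Hk (k+1)).orthogonalProjectionOnto w : Hk (k+1)) : E) with hp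
    have hpmem : p ∈ Hk (k+1) := SetLike.coe_mem _
    have hvmem : w - p ∈ (Hk (k+1))ᗮ := Submodule.sub_starProjection_mem_orthogonal (K := Hk (k+1)) w
    have hv0 : w - p ≠ 0 := by
      intro h
      rw [sub_eq_zero] at h
      exact (hstrict k).2 (by rw [show (T ^ k) y = p from h]; exact hpmem)
    refine ⟨((‖w - p‖ : ℂ))⁻¹ • (w - p), ?_, ?_, ?_⟩
    · rw [norm_smul]; simp [inv_mul_cancel₀ (norm_ne_zero_iff.mpr hv0)]
    · exact (Hk k).smul_mem _ (Submodule.sub_mem _ ((hstrict k).1) (hmono k hpmem))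
    · exact Submodule.smul_mem _ _ hvmem
  choose x hx1 hx2 hx3 using hsep
  have hsep2 : ∀ k l, k < l → 1 ≤ ‖S (x k) - S (x l)‖ := by
    intro k l hkl
    have hTk : ∀ m, T (x m) ∈ Hk (m+1) := by
      intro m
      obtain ⟨z, hz⟩ := hx2 m
      refine ⟨z, ?_⟩
      rw [pow_succ']
      show T ((T ^ m) z) = T (x m)
      exact congrArg T hz
    set w : E := T (x k) + x l - T (x l) with hwdef
    have hwmem : w ∈ Hk (k+1) := by
      refine Submodule.sub_mem _ (Submodule.add_mem _ (hTk k) ?_) ?_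
      · exact hmono' hkl (hx2 l)
      · exact hmono' (by omega : k + 1 ≤ l + 1) (hTk l)
    have hSdiff : S (x k) - S (x l) = x k - w := by
      simp only [hT, hwdef]
      simp [sub_apply, one_apply]
      abel
    rw [hSdiff]
    have hinner : (inner ℂ (x k) (x k - w) : ℂ) = 1 := by
      rw [inner_sub_right]
      have h1 : (inner ℂ (x k) (x k) : ℂ) = 1 := by
        rw [inner_self_eq_norm_sq_to_K, hx1 k]; norm_num
      have h2 : (inner ℂ (x k) w : ℂ) = 0 := by
        have := (Submodule.mem_orthogonal _ _).mp (hx3 k) w hwmem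
        rw [← inner_conj_symm, this, map_zero]
      rw [h1, h2, sub_zero]
    have hcs : ‖(inner ℂ (x k) (x k - w) : ℂ)‖ ≤ ‖x k‖ * ‖x k - w‖ :=
      norm_inner_le_norm _ _
    rw [hinner, hx1 k] at hcs
    simpa using hcs
  -- compactness contradiction
  have hball : ∀ n, x n ∈ Metric.closedBall (0 : E) 1 := by
    intro n; simp [Metric.mem_closedBall, dist_zero_right, (hx1 n).le]
  have hKc : IsCompact (closure (⇑S '' Metric.closedBall 0 1)) :=
    hS.isCompact_closure_image_of_bounded (f := (S : E →ₗ[ℂ] E))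
      Metric.isBounded_closedBall
  have hmem : ∀ n, S (x n) ∈ closure (⇑S '' Metric.closedBall 0 1) := fun n =>
    subset_closure ⟨x n, hball n, rfl⟩
  obtain ⟨z, -, φ, hφ, hz⟩ := hKc.tendsto_subseq hmem
  have hcauchy : CauchySeq (fun k => S (x (φ k))) := hz.cauchySeq
  obtain ⟨N, hN⟩ := Metric.cauchySeq_iff.mp hcauchy 1 one_pos
  have h1 := hN N le_rfl (N+1) (Nat.le_succ N)
  rw [dist_eq_norm] at h1
  have h2 := hsep2 (φ N) (φ (N+1)) (hφ (Nat.lt_succ_self N))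
  linarith

lemma isUnit_one_sub_of_compact (S : E →L[ℂ] E) (hS : IsCompactOperator ⇑S)
    (hinj : Function.Injective ⇑(1 - S)) : IsUnit (1 - S) := by
  have hsurj := surjective_of_compact_of_injective S hS hinj
  have hker : LinearMap.ker ((1 - S : E →L[ℂ] E) : E →ₗ[ℂ] E) = ⊥ := LinearMap.ker_eq_bot.mpr hinj
  have hrange : LinearMap.range ((1 - S : E →L[ℂ] E) : E →ₗ[ℂ] E) = ⊤ := LinearMap.range_eq_top.mpr hsurj
  exact ContinuousLinearMap.isUnit_iff_bijective.mpr ⟨hinj, hsurj⟩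

end Fred
/-- For a matrix-centre realization at `Y` with compact structure
operators, the invertibility domain of the Kalman compression to the minimal subspace
contains the invertibility domain of the original realization. -/
theorem kalman_compression_domain_of_compact
    {d n : ℕ} (Y : Fin d → Matrix (Fin n) (Fin n) ℂ)
    (A : Fin d → Matrix (Fin n) (Fin n) ℂ → (H →L[ℂ] H)) (hA : ∀ j, IsLinearMap ℂ (A j))
    (hcpt : ∀ (j : Fin d) (G : Matrix (Fin n) (Fin n) ℂ), IsCompactOperator ⇑(A j G))
    (b c : EuclideanSpace ℂ (Fin n) →L[ℂ] H)
    (Q₀ : H →L[ℂ] H) (hQidem : Q₀.comp Q₀ = Q₀) (hQsa : IsSelfAdjoint Q₀)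
    (hQran : LinearMap.range (Q₀ : H →ₗ[ℂ] H) =
      ctrlSpace A c ⊓ (ctrlSpace A c ⊓ (obsSpace A b)ᗮ)ᗮ)
    (m : ℕ) (hm : 0 < m) (X : Fin d → Matrix (Fin m × Fin n) (Fin m × Fin n) ℂ)
    (hX : IsUnit (pencil A (fun j => X j - oneKron (Fin m) (Y j)))) :
    IsUnit (pencil (fun j G => Q₀.comp ((A j G).comp Q₀))
      (fun j => X j - oneKron (Fin m) (Y j))) := by
  classical
  set Z : Fin d → Matrix (Fin m × Fin n) (Fin m × Fin n) ℂ :=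
    fun j => X j - oneKron (Fin m) (Y j) with hZ
  set Stot : PiLp 2 (fun _ : Fin m => H) →L[ℂ] PiLp 2 (fun _ : Fin m => H) :=
    ∑ j, amp (A j) (Z j) with hStot
  set P : PiLp 2 (fun _ : Fin m => H) →L[ℂ] PiLp 2 (fun _ : Fin m => H) :=
    ampQ (Fin m) Q₀ with hP
  -- basic Q₀ facts
  have hQ1 : ∀ x, Q₀ (Q₀ x) = Q₀ x := fun x => by
    have h := ContinuousLinearMap.ext_iff.mp hQidem x
    simpa using h
  have hQa : ∀ x y : H, (inner ℂ (Q₀ x) y : ℂ) = inner ℂ x (Q₀ y) := by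
    intro x y
    have hadj : ContinuousLinearMap.adjoint Q₀ = Q₀ := hQsa.adjoint_eq
    have h := ContinuousLinearMap.adjoint_inner_left Q₀ y x
    rwa [hadj] at h
  have hPP : ∀ x, P (P x) = P x := by
    intro x
    apply piLp_ext
    intro p
    rw [hP]
    rw [ampQ_apply, ampQ_apply]
    exact hQ1 _
  -- the compressed pencil is 1 - P Stot P
  have hcompress : pencil (fun j G => Q₀.comp ((A j G).comp Q₀)) Z
      = 1 - P.comp (Stot.comp P) := by
    unfold pencil
    congr 1
    apply ContinuousLinearMap.ext
    intro x
    apply piLp_ext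
    intro r
    have hl : (∑ j, amp (fun G => Q₀.comp ((A j G).comp Q₀)) (Z j)) x r
        = ∑ j, ∑ q, Q₀ (A j (blk (Z j) r q) (Q₀ (x q))) := by
      rw [ContinuousLinearMap.sum_apply, sum_component]
      refine Finset.sum_congr rfl fun j _ => ?_
      rw [amp_apply_comp]
      exact Finset.sum_congr rfl fun q _ => rfl
    have hr : (P.comp (Stot.comp P)) x r
        = ∑ j, ∑ q, Q₀ (A j (blk (Z j) r q) (Q₀ (x q))) := by
      have h1 : (P.comp (Stot.comp P)) x r = Q₀ ((Stot (P x)) r) := rfl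
      rw [h1]
      have h2 : (Stot (P x)) r = ∑ j, ∑ q, A j (blk (Z j) r q) (Q₀ (x q)) := by
        rw [hStot, ContinuousLinearMap.sum_apply, sum_component]
        refine Finset.sum_congr rfl fun j _ => ?_
        rw [amp_apply_comp]
        exact Finset.sum_congr rfl fun q _ => rfl
      rw [h2, map_sum]
      refine Finset.sum_congr rfl fun j _ => ?_
      rw [map_sum]
    rw [hl, hr]
  -- compactness
  have hScpt : IsCompactOperator ⇑Stot :=
    isCompactOperator_finsum _ _ (fun j _ => isCompactOperator_amp _ (hcpt j) _)
  have hPSPcpt : IsCompactOperator ⇑(P.comp (Stot.comp P)) := by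
    have h1 : IsCompactOperator (⇑Stot ∘ ⇑P) := hScpt.comp_clm P
    have h2 : IsCompactOperator (⇑P ∘ (⇑Stot ∘ ⇑P)) := h1.continuous_comp P.continuous
    simpa [ContinuousLinearMap.coe_comp, Function.comp_assoc] using h2
  -- the full pencil as 1 - Stot and its injectivity
  have hX' : IsUnit (1 - Stot) := hX
  have hTinj : Function.Injective ⇑(1 - Stot) := by
    intro a b hab
    have hu : (↑hX'.unit⁻¹ : PiLp 2 (fun _ : Fin m => H) →L[ℂ] PiLp 2 (fun _ : Fin m => H))
        * (1 - Stot) = 1 := hX'.val_inv_mul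
    have h3 : ∀ w, (↑hX'.unit⁻¹ : PiLp 2 (fun _ : Fin m => H) →L[ℂ] PiLp 2 (fun _ : Fin m => H))
        ((1 - Stot) w) = w := by
      intro w
      have h4 := ContinuousLinearMap.ext_iff.mp hu w
      rw [ContinuousLinearMap.mul_apply, ContinuousLinearMap.one_apply] at h4
      exact h4
    rw [← h3 a, ← h3 b, hab]
  -- subspaces
  set Cs : Submodule ℂ H := ctrlSpace A c with hCs
  set Os : Submodule ℂ H := obsSpace A b with hOs
  set N : Submodule ℂ H := Cs ⊓ Osᗮ with hNdef
  have hCc : IsClosed (Cs : Set H) := Submodule.isClosed_topologicalClosure _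
  have hNc : IsClosed (N : Set H) := by
    rw [hNdef, Submodule.coe_inf]
    exact hCc.inter Os.isClosed_orthogonal
  have hNC : N ≤ Cs := inf_le_left
  have hCinv : ∀ (j : Fin d) (G : Matrix (Fin n) (Fin n) ℂ) (x : H),
      x ∈ Cs → A j G x ∈ Cs := fun j G x hx => ctrlSpace_invariant A c j G hx
  have hNinv : ∀ (j : Fin d) (G : Matrix (Fin n) (Fin n) ℂ) (x : H),
      x ∈ N → A j G x ∈ N := fun j G x hx =>
    ⟨ctrlSpace_invariant A c j G hx.1, obsPerp_invariant A b j G hx.2⟩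
  have key1 : ∀ y ∈ Cs, y - Q₀ y ∈ N :=
    mem_N_of_mem_C_sub_proj Cs N hNc hNC Q₀ hQ1 hQa hQran
  -- componentwise invariance of Stot
  have hcomp_mem : ∀ (W : Submodule ℂ H),
      (∀ (j : Fin d) (G : Matrix (Fin n) (Fin n) ℂ) (x : H), x ∈ W → A j G x ∈ W) →
      ∀ x : PiLp 2 (fun _ : Fin m => H), (∀ p, x p ∈ W) → ∀ p, (Stot x) p ∈ W := by
    intro W hW x hx p
    have h1 : (Stot x) p = ∑ j, (amp (A j) (Z j)) x p := by
      rw [hStot, ContinuousLinearMap.sum_apply, sum_component]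
    rw [h1]
    refine Submodule.sum_mem _ fun j _ => ?_
    rw [amp_apply_comp]
    exact Submodule.sum_mem _ fun q _ => hW j _ _ (hx q)
  -- the ampliated subspace KK
  set KK : Submodule ℂ (PiLp 2 (fun _ : Fin m => H)) := piSub (Fin m) N with hKK
  have hKKc : IsClosed (KK : Set (PiLp 2 (fun _ : Fin m => H))) := piSub_isClosed N hNc
  haveI : CompleteSpace KK := hKKc.completeSpace_coe
  have hSKK : ∀ x : PiLp 2 (fun _ : Fin m => H), x ∈ KK → Stot x ∈ KK := by
    intro x hx
    exact hcomp_mem N hNinv x hx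
  set SKc : KK →L[ℂ] KK :=
    (Stot.comp KK.subtypeL).codRestrict KK (fun w => hSKK _ w.2) with hSKc
  have hSKcpt : IsCompactOperator ⇑SKc := by
    have h1 : IsCompactOperator ⇑(Stot.comp KK.subtypeL) := by
      have := hScpt.comp_clm KK.subtypeL
      simpa [ContinuousLinearMap.coe_comp] using this
    have h2 := h1.codRestrict (V := KK) (fun w => hSKK _ w.2) hKKc
    exact h2
  have hcoe : ∀ w : KK, (((1 - SKc) w : KK) : PiLp 2 (fun _ : Fin m => H))
      = (1 - Stot) (w : PiLp 2 (fun _ : Fin m => H)) := by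
    intro w
    simp [hSKc, ContinuousLinearMap.sub_apply, ContinuousLinearMap.one_apply]
    rfl
  have hTKinj : Function.Injective ⇑(1 - SKc) := by
    intro a b hab
    apply Subtype.ext
    apply hTinj
    rw [← hcoe a, ← hcoe b, hab]
  have TKsurj : Function.Surjective ⇑(1 - SKc) :=
    surjective_of_compact_of_injective SKc hSKcpt hTKinj
  -- injectivity of 1 - P Stot P
  have hker : ∀ ξ : PiLp 2 (fun _ : Fin m => H),
      (1 - P.comp (Stot.comp P)) ξ = 0 → ξ = 0 := by
    intro ξ hξ
    have hfix : ξ = P (Stot (P ξ)) := by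
      rw [ContinuousLinearMap.sub_apply, ContinuousLinearMap.one_apply, sub_eq_zero] at hξ
      exact hξ
    have hPξ : P ξ = ξ := by
      conv_lhs => rw [hfix]
      rw [hPP]
      exact hfix.symm
    have hfix' : ξ = P (Stot ξ) := by
      conv_lhs => rw [hfix]
      rw [hPξ]
    have hξM : ∀ p, ξ p ∈ LinearMap.range (Q₀ : H →ₗ[ℂ] H) := by
      intro p
      refine ⟨ξ p, ?_⟩
      have h1 : Q₀ (ξ p) = (P ξ) p := rfl
      show Q₀ (ξ p) = ξ p
      rw [h1, hPξ]
    have hξC : ∀ p, ξ p ∈ Cs := by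
      intro p
      have := hξM p
      rw [hQran] at this
      exact this.1
    have hSξC : ∀ p, (Stot ξ) p ∈ Cs := hcomp_mem Cs hCinv ξ hξC
    have hTξN : ((1 - Stot) ξ) ∈ KK := by
      intro p
      have h1 : ((1 - Stot) ξ) p = ξ p - (Stot ξ) p := rfl
      have h2 : ξ p = Q₀ ((Stot ξ) p) := by
        conv_lhs => rw [hfix']
        rfl
      rw [h1, h2]
      have h3 := key1 _ (hSξC p)
      have h4 : Q₀ ((Stot ξ) p) - (Stot ξ) p = -((Stot ξ) p - Q₀ ((Stot ξ) p)) := by abel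
      rw [h4]
      exact N.neg_mem h3
    obtain ⟨k, hk⟩ := TKsurj ⟨(1 - Stot) ξ, hTξN⟩
    have hk' : (1 - Stot) (k : PiLp 2 (fun _ : Fin m => H)) = (1 - Stot) ξ := by
      rw [← hcoe k, hk]
    have hξk : (k : PiLp 2 (fun _ : Fin m => H)) = ξ := hTinj hk'
    have hξN : ∀ p, ξ p ∈ N := by
      rw [← hξk]
      exact k.2
    apply piLp_ext
    intro p
    have hMp : ξ p ∈ Cs ⊓ Nᗮ := by
      rw [← hQran]
      exact hξM p
    have h5 := (Submodule.mem_orthogonal _ _).mp hMp.2 (ξ p) (hξN p)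
    have h6 : ξ p = 0 := inner_self_eq_zero.mp h5
    rw [h6]
    rfl
  -- conclude
  rw [hcompress]
  apply isUnit_one_sub_of_compact _ hPSPcpt
  intro a b' hab
  have := hker (a - b') (by rw [map_sub, hab, sub_self])
  exact sub_eq_zero.mp this

end MC
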